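/- arXiv:1701.06502 — 4 statements merged into one kernel-verified Lean document; each statement's English description precedes it below -/
import Mathlib

section
/- Suppose Problem 1 satisfies the pattern-substitution property: for every pattern α ∈ A and every tuple-link l ∈ L with r_{l,α} > 0, there exists a pattern α₂ ∈ A with r_{l,α₂} < r_{l,α}, with r_{l',α₂} ≥ r_{l',α} for every l' ≠ l, and with total power p_{α₂} < p_{α}. Then in any optimal solution (f^{(1)},…,f^{(Λ)}, t) of Problem 1, the capacity constraint holds with equality on every tuple-link: for every l ∈ L, Σ_{λ=1}^{Λ} f_l^{(λ)} = Σ_{α∈A} r_{l,α} t_α. -/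
/-!
If some tuple-link `l` had slack, some pattern `α` with `r l α > 0` would be in use (`t α > 0`).
Moving a small amount `ε` of time from `α` to its substitute `α₂` lowers the capacity only on
`l`, by `ε (r l α - r l α₂)`, which the slack absorbs for `ε` small, and it strictly lowers the
energy. This contradicts optimality.
-/

open Finset

theorem exists_pos_pos_of_dotProduct_pos {ι : Type*} [Fintype ι] {r t : ι → ℝ}
    (ht : ∀ i, 0 ≤ t i) (hrt : 0 < r ⬝ᵥ t) : ∃ i, 0 < r i ∧ 0 < t i := by
  obtain ⟨i, -, hi⟩ := exists_lt_of_sum_lt (s := univ) (f := 0) (g := fun i => r i * t i)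
    (by simpa [dotProduct] using hrt)
  have hri : 0 < r i := pos_of_mul_pos_left hi (ht i)
  exact ⟨i, hri, pos_of_mul_pos_right hi hri.le⟩

namespace TPScheduling

variable {A : Type*} [DecidableEq A]

def transfer (t : A → ℝ) (α α₂ : A) (ε : ℝ) : A → ℝ :=
  t - Pi.single α ε + Pi.single α₂ ε

theorem dotProduct_transfer [Fintype A] (g t : A → ℝ) (α α₂ : A) (ε : ℝ) :
    g ⬝ᵥ transfer t α α₂ ε = g ⬝ᵥ t + ε * (g α₂ - g α) := by
  simp only [transfer, dotProduct_add, dotProduct_sub, dotProduct_single]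
  ring

theorem sum_transfer [Fintype A] (t : A → ℝ) (α α₂ : A) (ε : ℝ) :
    ∑ β, transfer t α α₂ ε β = ∑ β, t β := by
  simpa [one_dotProduct] using dotProduct_transfer 1 t α α₂ ε

theorem transfer_nonneg {t : A → ℝ} (ht : ∀ β, 0 ≤ t β) {α : A} (α₂ : A) {ε : ℝ}
    (hε : 0 ≤ ε) (hεt : ε ≤ t α) (β : A) : 0 ≤ transfer t α α₂ ε β := by
  simp only [transfer, Pi.add_apply, Pi.sub_apply, Pi.single_apply]
  split_ifs <;> subst_vars <;> linarith [ht β]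

theorem exists_cheaper_of_slack {L : Type*} [Fintype A] {r : L → A → ℝ} {p : A → ℝ}
    (hsub : ∀ (α : A) (l : L), 0 < r l α →
      ∃ α₂ : A, r l α₂ < r l α ∧ (∀ l' : L, l' ≠ l → r l' α ≤ r l' α₂) ∧ p α₂ < p α)
    {t : A → ℝ} (ht : ∀ α, 0 ≤ t α) (c : L → ℝ) (hcap : ∀ l, c l ≤ r l ⬝ᵥ t)
    {l : L} (hc : 0 ≤ c l) (hslack : c l < r l ⬝ᵥ t) :
    ∃ t' : A → ℝ, (∀ α, 0 ≤ t' α) ∧ ∑ α, t' α = ∑ α, t α ∧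
      (∀ l', c l' ≤ r l' ⬝ᵥ t') ∧ p ⬝ᵥ t' < p ⬝ᵥ t := by
  obtain ⟨α, hrα, htα⟩ := exists_pos_pos_of_dotProduct_pos ht (hc.trans_lt hslack)
  obtain ⟨α₂, hrlt, hrge, hplt⟩ := hsub α l hrα
  have hd : 0 < r l α - r l α₂ := sub_pos.2 hrlt
  set ε := min (t α) ((r l ⬝ᵥ t - c l) / (r l α - r l α₂))
  have hε : 0 < ε := lt_min htα (div_pos (sub_pos.2 hslack) hd)
  have hεd : ε * (r l α - r l α₂) ≤ r l ⬝ᵥ t - c l := (le_div_iff₀ hd).1 (min_le_right _ _)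
  refine ⟨transfer t α α₂ ε, transfer_nonneg ht α₂ hε.le (min_le_left _ _),
    sum_transfer t α α₂ ε, fun l' => ?_, ?_⟩
  · rw [dotProduct_transfer]
    rcases eq_or_ne l' l with rfl | hl'
    · linarith [show ε * (r l' α₂ - r l' α) = -(ε * (r l' α - r l' α₂)) by ring]
    · linarith [mul_nonneg hε.le (sub_nonneg.2 (hrge l' hl')), hcap l']
  · rw [dotProduct_transfer]
    linarith [mul_neg_of_pos_of_neg hε (sub_neg.2 hplt)]

end TPScheduling

theorem stmt_0_general
    {L A N : Type*} [Fintype L] [Fintype A] (Λ : ℕ)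
    (r : L → A → ℝ)
    (p : A → ℝ) (H : Matrix N L ℝ) (q : Fin Λ → N → ℝ)
    -- pattern-substitution property
    (hsub : ∀ (α : A) (l : L), 0 < r l α →
      ∃ α₂ : A, r l α₂ < r l α ∧ (∀ l' : L, l' ≠ l → r l' α ≤ r l' α₂) ∧
        p α₂ < p α)
    (f : Fin Λ → L → ℝ) (t : A → ℝ)
    -- feasibility of (f, t)
    (hf : ∀ lam l, 0 ≤ f lam l)
    (hflow : ∀ lam, H.mulVec (f lam) = q lam)
    (ht : ∀ α, 0 ≤ t α)
    (ht1 : ∑ α, t α = 1)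
    (hcap : ∀ l, ∑ lam, f lam l ≤ ∑ α, r l α * t α)
    -- optimality of (f, t)
    (hopt : ∀ (f' : Fin Λ → L → ℝ) (t' : A → ℝ),
      (∀ lam l, 0 ≤ f' lam l) →
      (∀ lam, H.mulVec (f' lam) = q lam) →
      (∀ α, 0 ≤ t' α) →
      (∑ α, t' α = 1) →
      (∀ l, ∑ lam, f' lam l ≤ ∑ α, r l α * t' α) →
      ∑ α, p α * t α ≤ ∑ α, p α * t' α) :
    ∀ l : L, ∑ lam, f lam l = ∑ α, r l α * t α := by
  classical
  intro l
  refine (hcap l).antisymm (not_lt.1 fun hslack => ?_)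
  obtain ⟨t', ht', hsum, hcap', hcheaper⟩ := TPScheduling.exists_cheaper_of_slack hsub ht
    (fun l => ∑ lam, f lam l) hcap (sum_nonneg fun lam _ => hf lam l) hslack
  exact hcheaper.not_ge (hopt f t' hf hflow ht' (hsum.trans ht1) hcap')

/-- Under the pattern-substitution property, in any optimal
solution of Problem 1 the capacity constraint holds with equality on every
tuple-link. -/
theorem stmt_0
    {L A N : Type*} [Fintype L] [Fintype A] [Fintype N] (Λ : ℕ)
    (r : L → A → ℝ) (hr : ∀ l α, 0 ≤ r l α)
    (p : A → ℝ) (H : Matrix N L ℝ) (q : Fin Λ → N → ℝ)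
    -- pattern-substitution property
    (hsub : ∀ (α : A) (l : L), 0 < r l α →
      ∃ α₂ : A, r l α₂ < r l α ∧ (∀ l' : L, l' ≠ l → r l' α ≤ r l' α₂) ∧
        p α₂ < p α)
    (f : Fin Λ → L → ℝ) (t : A → ℝ)
    -- feasibility of (f, t)
    (hf : ∀ lam l, 0 ≤ f lam l)
    (hflow : ∀ lam, H.mulVec (f lam) = q lam)
    (ht : ∀ α, 0 ≤ t α)
    (ht1 : ∑ α, t α = 1)
    (hcap : ∀ l, ∑ lam, f lam l ≤ ∑ α, r l α * t α)
    -- optimality of (f, t)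
    (hopt : ∀ (f' : Fin Λ → L → ℝ) (t' : A → ℝ),
      (∀ lam l, 0 ≤ f' lam l) →
      (∀ lam, H.mulVec (f' lam) = q lam) →
      (∀ α, 0 ≤ t' α) →
      (∑ α, t' α = 1) →
      (∀ l, ∑ lam, f' lam l ≤ ∑ α, r l α * t' α) →
      ∑ α, p α * t α ≤ ∑ α, p α * t' α) :
    ∀ l : L, ∑ lam, f lam l = ∑ α, r l α * t α :=
  stmt_0_general Λ r p H q hsub f t hf hflow ht ht1 hcap hopt
end

section
/- Suppose Problem 1 satisfies the pattern-substitution property: for every pattern α ∈ A and every tuple-link l ∈ L with r_{l,α} > 0, there exists a pattern α₂ ∈ A with r_{l,α₂} < r_{l,α}, with r_{l',α₂} ≥ r_{l',α} for every l' ≠ l, and with total power p_{α₂} < p_{α}. If (f^{(1)},…,f^{(Λ)}, t) is a feasible solution of Problem 1 in which some tuple-link l is over-scheduled, i.e., Σ_{λ=1}^{Λ} f_l^{(λ)} < Σ_{α∈A} r_{l,α} t_α, then there exists a time allocation t' ∈ ℝ^A with t' ≥ 0 and Σ_{α∈A} t'_α = 1 such that (f^{(1)},…,f^{(Λ)}, t')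 is also feasible and has strictly smaller energy: Σ_{α∈A} p_α t'_α < Σ_{α∈A} p_α t_α. -/
/-!
Some pattern `α` is used for a positive time and serves the over-scheduled link `l` at a positive
rate. Moving a little time `ε` from `α` to the cheaper substitute pattern `α₂` lowers the energy
by `ε (p α - p α₂)`, does not lower any rate on the other links, and lowers the rate on `l` by
`ε (r l α - r l α₂)`, which the slack on `l` absorbs once `ε` is small enough.
-/

open Finset

lemma exists_pos_pos_of_sum_mul_pos {ι : Type*} [Fintype ι] {r t : ι → ℝ}
    (ht : ∀ i, 0 ≤ t i) (h : 0 < ∑ i, r i * t i) : ∃ i, 0 < r i ∧ 0 < t i := by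
  obtain ⟨i, -, hi⟩ := exists_lt_of_sum_lt (f := fun _ ↦ (0 : ℝ)) (by simpa using h)
  rcases pos_and_pos_or_neg_and_neg_of_mul_pos hi with hpos | ⟨-, hneg⟩
  · exact ⟨i, hpos⟩
  · exact absurd (ht i) hneg.not_ge

lemma exists_pos_le_mul_le {a δ d : ℝ} (ha : 0 < a) (hδ : 0 < δ) (hd : 0 < d) :
    ∃ ε, 0 < ε ∧ ε ≤ a ∧ ε * d ≤ δ :=
  ⟨min a (δ / d), lt_min ha (div_pos hδ hd), min_le_left _ _,
    (le_div_iff₀ hd).1 (min_le_right _ _)⟩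

section Shift

variable {ι : Type*} [DecidableEq ι]

lemma shift_nonneg {t : ι → ℝ} (ht : ∀ i, 0 ≤ t i) {a b : ι} {ε : ℝ} (hε : 0 ≤ ε)
    (hεa : ε ≤ t a) (i : ι) : 0 ≤ (t + Pi.single b ε - Pi.single a ε : ι → ℝ) i := by
  have := ht i
  simp only [Pi.add_apply, Pi.sub_apply, Pi.single_apply]
  split_ifs <;> subst_vars <;> linarith

variable [Fintype ι]

lemma sum_mul_shift (g t : ι → ℝ) (a b : ι) (ε : ℝ) :
    ∑ i, g i * (t + Pi.single b ε - Pi.single a ε : ι → ℝ) i =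
      ∑ i, g i * t i + ε * (g b - g a) := by
  simp only [Pi.add_apply, Pi.sub_apply, mul_sub, mul_add, sum_sub_distrib, sum_add_distrib,
    Pi.single_apply, mul_ite, mul_zero, sum_ite_eq', mem_univ, if_true]
  ring

end Shift

theorem stmt_1_general
    {L A : Type*} [Fintype A] (Λ : ℕ)
    (r : L → A → ℝ)
    (p : A → ℝ)
    -- pattern-substitution property
    (hsub : ∀ (α : A) (l : L), 0 < r l α →
      ∃ α₂ : A, r l α₂ < r l α ∧ (∀ l' : L, l' ≠ l → r l' α ≤ r l' α₂) ∧
        p α₂ < p α)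
    (f : Fin Λ → L → ℝ) (t : A → ℝ)
    -- feasibility of (f, t)
    (hf : ∀ lam l, 0 ≤ f lam l)
    (ht : ∀ α, 0 ≤ t α)
    (ht1 : ∑ α, t α = 1)
    (hcap : ∀ l, ∑ lam, f lam l ≤ ∑ α, r l α * t α)
    -- some tuple-link l is over-scheduled
    (l : L) (hover : ∑ lam, f lam l < ∑ α, r l α * t α) :
    ∃ t' : A → ℝ,
      (∀ α, 0 ≤ t' α) ∧
      (∑ α, t' α = 1) ∧
      (∀ l' : L, ∑ lam, f lam l' ≤ ∑ α, r l' α * t' α) ∧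
      ∑ α, p α * t' α < ∑ α, p α * t α := by
  classical
  obtain ⟨α, hrα, htα⟩ := exists_pos_pos_of_sum_mul_pos ht
    ((sum_nonneg fun lam _ ↦ hf lam l).trans_lt hover)
  obtain ⟨α₂, hlt, hge, hp⟩ := hsub α l hrα
  obtain ⟨ε, hε, hεα, hεslack⟩ :=
    exists_pos_le_mul_le htα (sub_pos.2 hover) (sub_pos.2 hlt)
  refine ⟨t + Pi.single α₂ ε - Pi.single α ε, shift_nonneg ht hε.le hεα, ?_, fun l' ↦ ?_, ?_⟩
  · simpa [ht1] using sum_mul_shift 1 t α α₂ ε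
  · rw [sum_mul_shift]
    rcases eq_or_ne l' l with rfl | hl'
    · linarith
    · linarith [hcap l', mul_nonneg hε.le (sub_nonneg.2 (hge l' hl'))]
  · rw [sum_mul_shift]
    linarith [mul_neg_of_pos_of_neg hε (sub_neg.2 hp)]

/-- Under the pattern-substitution property, a feasible
solution of Problem 1 with an over-scheduled tuple-link can be improved:
there is another feasible time allocation with strictly smaller energy. -/
theorem stmt_1
    {L A N : Type*} [Fintype L] [Fintype A] [Fintype N] (Λ : ℕ)
    (r : L → A → ℝ) (hr : ∀ l α, 0 ≤ r l α)
    (p : A → ℝ) (H : Matrix N L ℝ) (q : Fin Λ → N → ℝ)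
    -- pattern-substitution property
    (hsub : ∀ (α : A) (l : L), 0 < r l α →
      ∃ α₂ : A, r l α₂ < r l α ∧ (∀ l' : L, l' ≠ l → r l' α ≤ r l' α₂) ∧
        p α₂ < p α)
    (f : Fin Λ → L → ℝ) (t : A → ℝ)
    -- feasibility of (f, t)
    (hf : ∀ lam l, 0 ≤ f lam l)
    (hflow : ∀ lam, H.mulVec (f lam) = q lam)
    (ht : ∀ α, 0 ≤ t α)
    (ht1 : ∑ α, t α = 1)
    (hcap : ∀ l, ∑ lam, f lam l ≤ ∑ α, r l α * t α)
    -- some tuple-link l is over-scheduled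
    (l : L) (hover : ∑ lam, f lam l < ∑ α, r l α * t α) :
    ∃ t' : A → ℝ,
      (∀ α, 0 ≤ t' α) ∧
      (∑ α, t' α = 1) ∧
      (∀ l' : L, ∑ lam, f lam l' ≤ ∑ α, r l' α * t' α) ∧
      ∑ α, p α * t' α < ∑ α, p α * t α :=
  stmt_1_general Λ r p hsub f t hf ht ht1 hcap l hover
end

section
/- Let ŵ ∈ ℝ^{m+1}, with last entry ŵ₀, satisfy ŵᵀA_i ≤ c_i for every flow column i ∈ I. Let Û, U* ∈ ℝ satisfy Û + ŵ₀ ≤ 0 and U_α ≤ U* for every pattern column α ∈ J, where U_α = ŵᵀA_α − c_α − ŵ₀ is the utility of column α computed from ŵ. Define w̃ ∈ ℝ^{m+1} to agree with ŵ in the first m entries and to have last entry ŵ₀ − (U* − Û). Then w̃ is a feasible solution of the dual problem, i.e., w̃ᵀA_i ≤ c_i for every column i ∈ I ∪ J of A. -/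
/-! Lowering the last dual entry by `U* − Û` leaves `wᵀA_i` unchanged on flow columns, whose
last-row entry is `0`, and lowers it by `U* − Û` on pattern columns, whose last-row entry is `1`.
On a pattern column this is enough: `wᵀA_α − c_α ≤ U* + ŵ₀ ≤ U* − Û`. -/

theorem Finset.sum_update_mul {ι R : Type*} [Fintype ι] [DecidableEq ι] [CommRing R]
    (w a : ι → R) (i : ι) (v : R) :
    ∑ k, Function.update w i v k * a k = ∑ k, w k * a k + (v - w i) * a i := by
  have hsplit : Function.update w i v = w + Pi.single i (v - w i) := by
    ext k
    rcases eq_or_ne k i with rfl | hk <;> simp [Function.update_of_ne, *]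
  simp [hsplit, add_mul, Finset.sum_add_distrib, Pi.single_apply]

/-- Lemma 2 of the paper. Replacing the last entry `ŵ₀` of
`ŵ` by `ŵ₀ − (U* − Û)` yields a feasible solution of the dual of Problem 1. -/
theorem stmt_2
    {I J : Type*} (m : ℕ)
    (A : Matrix (Fin (m + 1)) (I ⊕ J) ℝ) (c : I ⊕ J → ℝ)
    -- the last row of A is 0 on flow columns and 1 on pattern columns
    (hA0 : ∀ i : I, A (Fin.last m) (Sum.inl i) = 0)
    (hA1 : ∀ α : J, A (Fin.last m) (Sum.inr α) = 1)
    (w : Fin (m + 1) → ℝ) (Uhat Ustar : ℝ)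
    -- ŵ is feasible on every flow column
    (hflow : ∀ i : I, (∑ k, w k * A k (Sum.inl i)) ≤ c (Sum.inl i))
    -- Û + ŵ₀ ≤ 0
    (hUhat : Uhat + w (Fin.last m) ≤ 0)
    -- U_α ≤ U* for every pattern column α
    (hUstar : ∀ α : J,
      (∑ k, w k * A k (Sum.inr α)) - c (Sum.inr α) - w (Fin.last m) ≤ Ustar) :
    -- w̃ agrees with ŵ except that its last entry is ŵ₀ − (U* − Û)
    ∀ j : I ⊕ J,
      (∑ k, Function.update w (Fin.last m)
          (w (Fin.last m) - (Ustar - Uhat)) k * A k j) ≤ c j := by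
  rintro (i | α)
  · rw [Finset.sum_update_mul, hA0 i, mul_zero, add_zero]
    exact hflow i
  · rw [Finset.sum_update_mul, hA1 α, mul_one]
    linarith [hUstar α]
end

section
/- Let ŵ ∈ ℝ^{m+1}, with last entry ŵ₀, satisfy ŵᵀA_i ≤ c_i for every flow column i ∈ I, and let Û, U* ∈ ℝ satisfy Û + ŵ₀ ≤ 0 and U_α ≤ U* for every pattern column α ∈ J, where U_α = ŵᵀA_α − c_α − ŵ₀. Set Ê := ŵᵀb, and let Ũ ∈ ℝ satisfy U* ≤ Ũ. Then for every primal-feasible x (i.e., Ax = b and x ≥ 0), cᵀx ≥ Ê − (Ũ − Û); that is, Ê − (Ũ − Û) is a lower bound on the optimal value E* of Problem 1. -/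
/-!
Lowering the last coordinate of `ŵ` by `δ := Ũ + ŵ₀` keeps it feasible on the flow columns,
which vanish in the last row, and makes it feasible on the pattern columns, whose reduced costs
`U_α ≤ U* ≤ Ũ` are then at most `0`. Weak duality bounds `cᵀx` below by the objective
`ŵᵀb - δ` of the shifted vector, and `Û + ŵ₀ ≤ 0` gives `ŵᵀb - δ ≥ Ê - (Ũ - Û)`.
-/

open Matrix

theorem Matrix.dotProduct_le_of_vecMul_le {m n R : Type*} [Fintype m] [Fintype n]
    [Semiring R] [PartialOrder R] [IsOrderedRing R]
    {A : Matrix m n R} {b : m → R} {c : n → R} {y : m → R} {x : n → R}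
    (hy : y ᵥ* A ≤ c) (hx : A *ᵥ x = b) (hx0 : 0 ≤ x) : y ⬝ᵥ b ≤ c ⬝ᵥ x := by
  rw [← hx, dotProduct_mulVec]
  exact dotProduct_le_dotProduct_of_nonneg_right hy hx0

theorem Matrix.dotProduct_sub_le_of_convexity_row {ι I J R : Type*} [Fintype ι] [DecidableEq ι]
    [Fintype I] [Fintype J] [Ring R] [PartialOrder R] [IsOrderedRing R]
    {A : Matrix ι (I ⊕ J) R} {b : ι → R} {c x : I ⊕ J → R} {w : ι → R} {r : ι} {δ : R}
    (hA0 : ∀ i, A r (.inl i) = 0) (hA1 : ∀ α, A r (.inr α) = 1) (hb : b r = 1)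
    (hflow : ∀ i, (w ᵥ* A) (.inl i) ≤ c (.inl i))
    (hpattern : ∀ α, (w ᵥ* A) (.inr α) - c (.inr α) ≤ δ)
    (hx : A *ᵥ x = b) (hx0 : 0 ≤ x) : w ⬝ᵥ b - δ ≤ c ⬝ᵥ x := by
  have hfeas : (w - Pi.single r δ) ᵥ* A ≤ c := by
    intro j
    rw [sub_vecMul, single_vecMul]
    rcases j with i | α
    · simpa [hA0 i] using hflow i
    · simpa [hA1 α, add_comm] using hpattern α
  simpa [sub_dotProduct, single_dotProduct, hb] using
    dotProduct_le_of_vecMul_le hfeas hx hx0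

/-- Composite lower bound on the optimum of Problem 1:
`Ê − (Ũ − Û)` lower-bounds `cᵀx` for every primal-feasible `x`, where `Ũ`
upper-bounds the optimal sub-problem utility `U*`. -/
theorem stmt_9
    {I J : Type*} [Fintype I] [Fintype J] (m : ℕ)
    (A : Matrix (Fin (m + 1)) (I ⊕ J) ℝ) (c : I ⊕ J → ℝ)
    (b : Fin (m + 1) → ℝ)
    -- the last row of A is 0 on flow columns and 1 on pattern columns
    (hA0 : ∀ i : I, A (Fin.last m) (Sum.inl i) = 0)
    (hA1 : ∀ α : J, A (Fin.last m) (Sum.inr α) = 1)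
    -- the last entry of b is 1
    (hb : b (Fin.last m) = 1)
    (w : Fin (m + 1) → ℝ) (Uhat Ustar Utilde : ℝ)
    -- ŵ is feasible on every flow column
    (hflow : ∀ i : I, (∑ k, w k * A k (Sum.inl i)) ≤ c (Sum.inl i))
    -- Û + ŵ₀ ≤ 0
    (hUhat : Uhat + w (Fin.last m) ≤ 0)
    -- U_α ≤ U* for every pattern column α
    (hUstar : ∀ α : J,
      (∑ k, w k * A k (Sum.inr α)) - c (Sum.inr α) - w (Fin.last m) ≤ Ustar)
    -- Ũ upper-bounds U*
    (hUtilde : Ustar ≤ Utilde) :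
    ∀ x : I ⊕ J → ℝ, A.mulVec x = b → (∀ j, 0 ≤ x j) →
      (∑ k, w k * b k) - (Utilde - Uhat) ≤ ∑ j, c j * x j := by
  intro x hx hx0
  change w ⬝ᵥ b - (Utilde - Uhat) ≤ c ⬝ᵥ x
  have hpattern : ∀ α, (w ᵥ* A) (.inr α) - c (.inr α) ≤ Utilde + w (Fin.last m) := by
    intro α
    show ∑ k, w k * A k (.inr α) - c (.inr α) ≤ _
    linarith [hUstar α]
  have hbound := dotProduct_sub_le_of_convexity_row hA0 hA1 hb hflow hpattern hx hx0
  linarith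
end
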